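/- arXiv:1505.00873 — 3 statements merged into one kernel-verified Lean document; each statement's English description precedes it below -/
import Mathlib

section
/- Let v_i : [0,k̄) → [0,∞) be a sequence of convex non-decreasing functions. Then there exists a subsequence, a point k₀ ∈ [0,k̄], and a function v₀ : [0,k̄) → [0,∞] such that along the subsequence v_i converges to v₀ pointwise, v₀ is real-valued on [0,k₀), v₀ = +∞ on (k₀,k̄), and the convergence is uniform on compact subsets of [0,k₀). -/
/-!
Extract a subsequence that converges in `EReal` at every rational point, and let `k₀` be the
supremum of the points at which it stays bounded. Below `k₀`, convexity and monotonicity bound the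
slopes on `[0, b]` by the value at a bounded point beyond `b`, so the family is equi-Lipschitz
there; convergence at the rationals then spreads to every point and is uniform on compact sets.
Above `k₀`, the limit at a rational point in between is `⊤`, and monotonicity pushes it up.
One more extraction takes care of the point `k₀` itself.
-/

open Set Filter Topology
open scoped NNReal

theorem ConvexOn.lipschitzOnWith_Icc_of_monotoneOn {s : Set ℝ} {f : ℝ → ℝ}
    (hf : ConvexOn ℝ s f) (hmono : MonotoneOn f s) {c b a : ℝ} (hs : Icc c a ⊆ s) (hba : b < a) :
    LipschitzOnWith ((f a - f c) / (a - b)).toNNReal f (Icc c b) := by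
  have hmem : ∀ {x}, x ∈ Icc c b → x ∈ s := fun hx => hs ⟨hx.1, hx.2.trans hba.le⟩
  have key : ∀ x ∈ Icc c b, ∀ y ∈ Icc c b, x < y →
      f y - f x ≤ (f a - f c) / (a - b) * (y - x) := by
    intro x hx y hy hxy
    have hya : y < a := hy.2.trans_lt hba
    have ha : a ∈ s := hs ⟨hx.1.trans (hxy.trans hya).le, le_rfl⟩
    have hcy : f c ≤ f y := hmono (hmem ⟨le_rfl, hx.1.trans hx.2⟩) (hmem hy) (hx.1.trans hxy.le)
    have hya' : f y ≤ f a := hmono (hmem hy) ha hya.le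
    have slope_le : (f a - f y) / (a - y) ≤ (f a - f c) / (a - b) :=
      div_le_div₀ (by linarith) (by linarith) (by linarith) (by linarith [hy.2])
    calc f y - f x = (f y - f x) / (y - x) * (y - x) := by field_simp [sub_ne_zero.2 hxy.ne']
      _ ≤ (f a - f c) / (a - b) * (y - x) := mul_le_mul_of_nonneg_right
          ((hf.slope_mono_adjacent (hmem hx) ha hxy hya).trans slope_le) (sub_nonneg.2 hxy.le)
  refine LipschitzOnWith.of_dist_le' fun x hx y hy => ?_
  wlog hxy : x ≤ y generalizing x y
  · rw [dist_comm, dist_comm x]; exact this y hy x hx (le_of_not_ge hxy)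
  rcases hxy.eq_or_lt with rfl | hxy
  · simp
  rw [dist_comm, dist_comm x, Real.dist_eq, Real.dist_eq, abs_of_pos (sub_pos.2 hxy),
    abs_of_nonneg (sub_nonneg.2 (hmono (hmem hx) (hmem hy) hxy.le))]
  exact key x hx y hy hxy

theorem cauchySeq_apply_of_lipschitzOnWith {X α : Type*} [PseudoMetricSpace X]
    [PseudoMetricSpace α] {F : ℕ → X → α} {K : ℝ≥0} {s : Set X}
    (hF : ∀ i, LipschitzOnWith K (F i) s) {x : X} (hx : x ∈ s)
    (happrox : ∀ ε > 0, ∃ y ∈ s, dist x y < ε ∧ CauchySeq (F · y)) :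
    CauchySeq (F · x) := by
  refine Metric.cauchySeq_iff'.2 fun ε hε => ?_
  obtain ⟨y, hy, hxy, hcauchy⟩ := happrox (ε / (3 * (K + 1))) (by positivity)
  obtain ⟨N, hN⟩ := Metric.cauchySeq_iff'.1 hcauchy (ε / 3) (by positivity)
  have hclose : ∀ i, dist (F i x) (F i y) ≤ ε / 3 := fun i => calc
    dist (F i x) (F i y) ≤ K * dist x y := (hF i).dist_le_mul x hx y hy
    _ ≤ (K + 1) * (ε / (3 * (K + 1))) := by gcongr; linarith
    _ = ε / 3 := by field_simp
  refine ⟨N, fun n hn => ?_⟩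
  calc dist (F n x) (F N x) ≤ dist (F n x) (F n y) + dist (F n y) (F N y) + dist (F N y) (F N x) :=
        dist_triangle4 _ _ _ _
    _ < ε := by linarith [hclose n, hclose N, dist_comm (F N y) (F N x), hN n hn]

theorem tendstoUniformlyOn_of_lipschitzOnWith {ι X α : Type*} [PseudoMetricSpace X]
    [PseudoMetricSpace α] {F : ι → X → α} {f : X → α} {l : Filter ι} {K : ℝ≥0} {s : Set X}
    (hs : IsCompact s) (hF : ∀ i, LipschitzOnWith K (F i) s)
    (hlim : ∀ x ∈ s, Tendsto (F · x) l (𝓝 (f x))) : TendstoUniformlyOn F f l s := by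
  have hequi := (LipschitzOnWith.uniformEquicontinuousOn F K hF).equicontinuousOn
  have := (EquicontinuousOn.tendsto_uniformOnFun_iff_pi' (𝔖 := {s}) (by simpa using hs)
    (by simpa using hequi) l f).2 ?_
  · exact (UniformOnFun.tendsto_iff_tendstoUniformlyOn.1 this) s rfl
  exact tendsto_pi_nhds.2 fun x => hlim x (by simpa using x.2)

theorem bddAbove_range_of_tendsto_coe_ne_top {x : ℕ → ℝ} {L : EReal}
    (h : Tendsto (fun n => (x n : EReal)) atTop (𝓝 L)) (hL : L ≠ ⊤) : BddAbove (range x) := by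
  obtain ⟨c, hLc, -⟩ := EReal.lt_iff_exists_real_btwn.1 hL.lt_top
  refine IsBoundedUnder.bddAbove_range ⟨c, eventually_map.2 ?_⟩
  filter_upwards [h.eventually (gt_mem_nhds hLc)] with n hn
  exact_mod_cast hn.le

theorem tendsto_toReal_of_tendsto_coe {x : ℕ → ℝ} {L : EReal}
    (h : Tendsto (fun n => (x n : EReal)) atTop (𝓝 L)) (hbdd : BddAbove (range x))
    (hbdd' : BddBelow (range x)) : Tendsto x atTop (𝓝 L.toReal) := by
  obtain ⟨C, hC⟩ := hbdd
  obtain ⟨c, hc⟩ := hbdd'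
  have hLC : L ≤ C := le_of_tendsto' h fun n => EReal.coe_le_coe_iff.2 (hC (mem_range_self n))
  have hcL : (c : EReal) ≤ L :=
    ge_of_tendsto' h fun n => EReal.coe_le_coe_iff.2 (hc (mem_range_self n))
  exact (EReal.tendsto_toReal (hLC.trans_lt (EReal.coe_lt_top C)).ne
    ((EReal.bot_lt_coe c).trans_le hcL).ne').comp h

theorem Filter.Tendsto.tendsto_limsup {α β : Type*} [ConditionallyCompleteLinearOrder α]
    [TopologicalSpace α] [OrderTopology α] {f : Filter β} [f.NeBot] {u : β → α} {c : α}
    (h : Tendsto u f (𝓝 c)) : Tendsto u f (𝓝 (limsup u f)) :=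
  h.limsup_eq ▸ h

theorem limsup_coe_eq_of_tendsto {x : ℕ → ℝ} {l : ℝ} (h : Tendsto x atTop (𝓝 l)) :
    limsup (fun n => (x n : EReal)) atTop = l :=
  (EReal.tendsto_coe.2 h).limsup_eq

theorem IsCompact.exists_subset_Icc_of_subset_Ico {S : Set ℝ} {a c : ℝ} (hS : IsCompact S)
    (h : S ⊆ Ico a c) : ∃ b < c, S ⊆ Icc a b := by
  rcases S.eq_empty_or_nonempty with rfl | hne
  · exact ⟨c - 1, by linarith, empty_subset _⟩
  · exact ⟨sSup S, (h (hS.sSup_mem hne)).2, fun x hx => ⟨(h hx).1, le_csSup hS.bddAbove hx⟩⟩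

-- `sSup ∅ = 0` is the right value also when the family is unbounded at every point.
noncomputable def blowUpPoint (kbar : ℝ) (w : ℕ → ℝ → ℝ) : ℝ :=
  sSup {x ∈ Ico 0 kbar | BddAbove (range fun i => w i x)}

section blowUpPoint

variable {kbar : ℝ} {w : ℕ → ℝ → ℝ}

theorem blowUpPoint_nonneg : 0 ≤ blowUpPoint kbar w :=
  Real.sSup_nonneg fun _ hx => hx.1.1

theorem blowUpPoint_le (hkbar : 0 ≤ kbar) : blowUpPoint kbar w ≤ kbar :=
  Real.sSup_le (fun _ hx => hx.1.2.le) hkbar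

theorem exists_bddAbove_of_lt_blowUpPoint {x : ℝ} (hx0 : 0 ≤ x) (hx : x < blowUpPoint kbar w) :
    ∃ y ∈ Ico 0 kbar, x < y ∧ BddAbove (range fun i => w i y) := by
  have hne : {x ∈ Ico 0 kbar | BddAbove (range fun i => w i x)}.Nonempty := by
    by_contra hempty
    rw [not_nonempty_iff_eq_empty] at hempty
    simp only [blowUpPoint, hempty, Real.sSup_empty] at hx
    linarith
  obtain ⟨y, ⟨hy, hbdd⟩, hxy⟩ := exists_lt_of_lt_csSup hne hx
  exact ⟨y, hy, hxy, hbdd⟩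

theorem not_bddAbove_of_blowUpPoint_lt {y : ℝ} (hy : y ∈ Ico 0 kbar)
    (h : blowUpPoint kbar w < y) : ¬BddAbove (range fun i => w i y) := fun hbdd =>
  h.not_ge <| le_csSup ⟨kbar, fun _ hx => hx.1.2.le⟩ ⟨hy, hbdd⟩

theorem mem_Ico_of_lt_blowUpPoint {x : ℝ} (hx0 : 0 ≤ x) (hx : x < blowUpPoint kbar w) :
    x ∈ Ico 0 kbar :=
  have ⟨_, hy, hxy, _⟩ := exists_bddAbove_of_lt_blowUpPoint hx0 hx
  ⟨hx0, hxy.trans hy.2⟩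

theorem bddAbove_of_lt_blowUpPoint (hmono : ∀ i, MonotoneOn (w i) (Ico 0 kbar)) {x : ℝ}
    (hx0 : 0 ≤ x) (hx : x < blowUpPoint kbar w) : BddAbove (range fun i => w i x) := by
  obtain ⟨y, hy, hxy, C, hC⟩ := exists_bddAbove_of_lt_blowUpPoint hx0 hx
  refine ⟨C, forall_mem_range.2 fun i => ?_⟩
  exact (hmono i ⟨hx0, hxy.trans hy.2⟩ hy hxy.le).trans (hC (mem_range_self i))

theorem exists_lipschitzOnWith_of_lt_blowUpPoint (hconv : ∀ i, ConvexOn ℝ (Ico 0 kbar) (w i))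
    (hmono : ∀ i, MonotoneOn (w i) (Ico 0 kbar)) (hnonneg : ∀ i, ∀ k ∈ Ico 0 kbar, 0 ≤ w i k)
    {b : ℝ} (hb : b < blowUpPoint kbar w) : ∃ K, ∀ i, LipschitzOnWith K (w i) (Icc 0 b) := by
  rcases lt_or_ge b 0 with hb0 | hb0
  · exact ⟨0, fun i => by simp [Icc_eq_empty_of_lt hb0]⟩
  obtain ⟨y, hy, hby, C, hC⟩ := exists_bddAbove_of_lt_blowUpPoint hb0 hb
  refine ⟨(C / (y - b)).toNNReal, fun i => ?_⟩
  refine ((hconv i).lipschitzOnWith_Icc_of_monotoneOn (hmono i)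
    (fun z hz => ⟨hz.1, hz.2.trans_lt hy.2⟩) hby).weaken (Real.toNNReal_le_toNNReal ?_)
  have hwy : w i y ≤ C := hC (mem_range_self i)
  have hw0 : 0 ≤ w i 0 := hnonneg i 0 ⟨le_rfl, hy.1.trans_lt hy.2⟩
  exact div_le_div_of_nonneg_right (by linarith) (by linarith)

theorem exists_tendsto_of_lt_blowUpPoint (hconv : ∀ i, ConvexOn ℝ (Ico 0 kbar) (w i))
    (hmono : ∀ i, MonotoneOn (w i) (Ico 0 kbar)) (hnonneg : ∀ i, ∀ k ∈ Ico 0 kbar, 0 ≤ w i k)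
    (hrat : ∀ q : ℚ, ∃ L, Tendsto (fun i => (w i q : EReal)) atTop (𝓝 L)) {x : ℝ}
    (hx0 : 0 ≤ x) (hx : x < blowUpPoint kbar w) : ∃ l : ℝ, Tendsto (w · x) atTop (𝓝 l) := by
  obtain ⟨b, hxb, hb⟩ := exists_between hx
  obtain ⟨K, hK⟩ := exists_lipschitzOnWith_of_lt_blowUpPoint hconv hmono hnonneg hb
  refine cauchySeq_tendsto_of_complete <| cauchySeq_apply_of_lipschitzOnWith hK ⟨hx0, hxb.le⟩
    fun ε hε => ?_
  obtain ⟨q, hxq, hqb⟩ := exists_rat_btwn (lt_min hxb (lt_add_of_pos_right x hε))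
  have hq0 : 0 ≤ (q : ℝ) := hx0.trans hxq.le
  have hqk : (q : ℝ) < blowUpPoint kbar w := (hqb.trans_le (min_le_left _ _)).trans hb
  obtain ⟨L, hL⟩ := hrat q
  refine ⟨q, ⟨hq0, (hqb.trans_le (min_le_left _ _)).le⟩, ?_, ?_⟩
  · rw [Real.dist_eq, abs_sub_lt_iff]
    constructor <;> linarith [hqb.trans_le (min_le_right _ _)]
  · exact (tendsto_toReal_of_tendsto_coe hL (bddAbove_of_lt_blowUpPoint hmono hq0 hqk)
      ⟨0, forall_mem_range.2 fun i => hnonneg i q (mem_Ico_of_lt_blowUpPoint hq0 hqk)⟩).cauchySeq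

theorem tendsto_top_of_blowUpPoint_lt (hmono : ∀ i, MonotoneOn (w i) (Ico 0 kbar))
    (hrat : ∀ q : ℚ, ∃ L, Tendsto (fun i => (w i q : EReal)) atTop (𝓝 L)) {y : ℝ}
    (hy : y ∈ Ioo (blowUpPoint kbar w) kbar) :
    Tendsto (fun i => (w i y : EReal)) atTop (𝓝 ⊤) := by
  obtain ⟨q, hkq, hqy⟩ := exists_rat_btwn hy.1
  have hq : (q : ℝ) ∈ Ico 0 kbar := ⟨blowUpPoint_nonneg.trans hkq.le, hqy.trans hy.2⟩
  obtain ⟨L, hL⟩ := hrat q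
  obtain rfl : L = ⊤ := by
    by_contra hL'
    exact not_bddAbove_of_blowUpPoint_lt hq hkq (bddAbove_range_of_tendsto_coe_ne_top hL hL')
  refine tendsto_nhds_top_mono hL (Eventually.of_forall fun i => ?_)
  exact EReal.coe_le_coe_iff.2 (hmono i hq ⟨hq.1.trans hqy.le, hy.2⟩ hqy.le)

end blowUpPoint

theorem compactness_for_wage_functions
    (kbar : ℝ) (hkbar : 0 < kbar)
    (v : ℕ → ℝ → ℝ)
    (hconv : ∀ i, ConvexOn ℝ (Set.Ico 0 kbar) (v i))
    (hmono : ∀ i, MonotoneOn (v i) (Set.Ico 0 kbar))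
    (hnonneg : ∀ i, ∀ k ∈ Set.Ico 0 kbar, 0 ≤ v i k) :
    ∃ (φ : ℕ → ℕ) (k₀ : ℝ) (v₀ : ℝ → EReal),
      StrictMono φ ∧ k₀ ∈ Set.Icc 0 kbar ∧
      (∀ k ∈ Set.Ico 0 kbar,
        Tendsto (fun i => ((v (φ i) k : ℝ) : EReal)) atTop (nhds (v₀ k))) ∧
      (∀ k ∈ Set.Ico 0 k₀, v₀ k ≠ ⊤) ∧
      (∀ k ∈ Set.Ioo k₀ kbar, v₀ k = ⊤) ∧
      (∀ S : Set ℝ, IsCompact S → S ⊆ Set.Ico 0 k₀ →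
        TendstoUniformlyOn (fun i k => v (φ i) k)
          (fun k => (v₀ k).toReal) atTop S) := by
  obtain ⟨L, φ₁, hφ₁, hL⟩ := CompactSpace.tendsto_subseq fun i (q : ℚ) => (v i q : EReal)
  set k₀ := blowUpPoint kbar (v ∘ φ₁)
  have hrat : ∀ q : ℚ, ∃ L, Tendsto (fun i => (v (φ₁ i) q : EReal)) atTop (𝓝 L) :=
    fun q => ⟨L q, tendsto_pi_nhds.1 hL q⟩
  obtain ⟨l₀, ψ, hψ, hl₀⟩ := CompactSpace.tendsto_subseq fun i => (v (φ₁ i) k₀ : EReal)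
  set φ := φ₁ ∘ ψ
  have hbelow : ∀ k ∈ Ico 0 k₀, ∃ l : ℝ, Tendsto (fun i => v (φ i) k) atTop (𝓝 l) :=
    fun k hk => (exists_tendsto_of_lt_blowUpPoint (fun i => hconv _) (fun i => hmono _)
      (fun i => hnonneg _) hrat hk.1 hk.2).imp fun _ hl => hl.comp hψ.tendsto_atTop
  have habove : ∀ k ∈ Ioo k₀ kbar, Tendsto (fun i => (v (φ i) k : EReal)) atTop (𝓝 ⊤) :=
    fun k hk => (tendsto_top_of_blowUpPoint_lt (fun i => hmono _) hrat hk).comp hψ.tendsto_atTop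
  refine ⟨φ, k₀, fun k => limsup (fun i => (v (φ i) k : EReal)) atTop, hφ₁.comp hψ,
    ⟨blowUpPoint_nonneg, blowUpPoint_le hkbar.le⟩, fun k hk => ?_, fun k hk => ?_,
    fun k hk => (habove k hk).limsup_eq, fun S hS hSk₀ => ?_⟩
  · rcases lt_trichotomy k k₀ with h | rfl | h
    · obtain ⟨l, hl⟩ := hbelow k ⟨hk.1, h⟩
      exact (EReal.tendsto_coe.2 hl).tendsto_limsup
    · exact hl₀.tendsto_limsup
    · exact (habove k ⟨h, hk.2⟩).tendsto_limsup
  · obtain ⟨l, hl⟩ := hbelow k hk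
    simp [limsup_coe_eq_of_tendsto hl]
  · obtain ⟨b, hbk₀, hSb⟩ := hS.exists_subset_Icc_of_subset_Ico hSk₀
    obtain ⟨K, hK⟩ := exists_lipschitzOnWith_of_lt_blowUpPoint (fun i => hconv _)
      (fun i => hmono _) (fun i => hnonneg _) hbk₀
    refine tendstoUniformlyOn_of_lipschitzOnWith hS (fun i => (hK (ψ i)).mono hSb) fun x hx => ?_
    obtain ⟨l, hl⟩ := hbelow x (hSk₀ hx)
    simpa [limsup_coe_eq_of_tendsto hl] using hl
end

section
/- Suppose v : [0,k̄) → [0,∞) is convex non-decreasing, c ≥ 0, N·θ ≥ 1 with θ ∈ (0,1), b_E' ≥ b̲ > 0, and suppose a sequence k₀ > k₁ > k₂ > … in [0,k̄) satisfies the recursion v'(k_i⁺) = Nθ(c·b_E'(k_{i+1}) + v'(k_{i+1}⁺)) for all i, where v'(·⁺) denotes the right derivative. If c > 0 or v'(0⁺) > 0, and additionally Nθ > 1 or c > 0, then the sequence cannot be infinite: no infinite strictly decreasing sequence satisfying this recursion exists. -/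
open Set Filter Topology

theorem no_infinite_teacher_chain
    (θ N c kbar bLow : ℝ)
    (hθ : θ ∈ Set.Ioo (0:ℝ) 1) (hN : 1 ≤ N) (hNθ : 1 ≤ N * θ)
    (hc : 0 ≤ c) (hkbar : 0 < kbar) (hbLow : 0 < bLow)
    (v g bE' : ℝ → ℝ)
    (hvconv : ConvexOn ℝ (Set.Ico 0 kbar) v)
    (hvmono : MonotoneOn v (Set.Ico 0 kbar))
    -- g is the right derivative of v on [0, kbar)
    (hg : ∀ x ∈ Set.Ico 0 kbar, HasDerivWithinAt v (g x) (Set.Ici x) x)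
    (hgnonneg : ∀ x ∈ Set.Ico 0 kbar, 0 ≤ g x)
    (hgmono : MonotoneOn g (Set.Ico 0 kbar))
    (hbE'cont : Continuous bE')
    (hbE' : ∀ x, bLow ≤ bE' x)
    (k : ℕ → ℝ)
    (hkmem : ∀ i, k i ∈ Set.Ico 0 kbar)
    (hkdec : ∀ i, k (i+1) < k i)
    (hrec : ∀ i, g (k i) = N * θ * (c * bE' (k (i+1)) + g (k (i+1))))
    (h1 : 0 < c ∨ 0 < g 0)
    (h2 : 1 < N * θ ∨ 0 < c) :
    False := by
  by_cases hc0 : 0 < c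
  · -- step inequality: g (k n) ≥ g (k (n+1)) + c * bLow
    have step : ∀ n, g (k (n+1)) + c * bLow ≤ g (k n) := by
      intro n
      have hbn := hbE' (k (n+1))
      have hgn := hgnonneg _ (hkmem (n+1))
      have hr := hrec n
      have hA : c * bLow + g (k (n+1)) ≤ c * bE' (k (n+1)) + g (k (n+1)) := by
        nlinarith [mul_le_mul_of_nonneg_left hbn hc]
      have hpos : 0 ≤ c * bE' (k (n+1)) + g (k (n+1)) := by
        nlinarith [mul_le_mul_of_nonneg_left hbn hc, mul_nonneg hc hbLow.le]
      have hB : c * bE' (k (n+1)) + g (k (n+1)) ≤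
          N * θ * (c * bE' (k (n+1)) + g (k (n+1))) :=
        le_mul_of_one_le_left hpos hNθ
      linarith
    have claim : ∀ n : ℕ, g (k n) + n * (c * bLow) ≤ g (k 0) := by
      intro n
      induction n with
      | zero => simp
      | succ n ih =>
        have := step n
        push_cast
        nlinarith
    obtain ⟨n, hn⟩ := exists_nat_gt (g (k 0) / (c * bLow))
    have hcb : 0 < c * bLow := mul_pos hc0 hbLow
    have h3 : g (k 0) < n * (c * bLow) := by
      rwa [div_lt_iff₀ hcb] at hn
    have := claim n
    have hgn := hgnonneg _ (hkmem n)
    linarith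
  · -- c = 0 case
    have hc' : c = 0 := le_antisymm (not_lt.mp hc0) hc
    have hg0 : 0 < g 0 := h1.resolve_left hc0
    have hNθ1 : 1 < N * θ := h2.resolve_right hc0
    have claim : ∀ n : ℕ, g (k 0) = (N * θ) ^ n * g (k n) := by
      intro n
      induction n with
      | zero => simp
      | succ n ih =>
        have hr := hrec n
        rw [hc'] at hr
        simp at hr
        rw [ih, hr, pow_succ]
        ring
    have hmem0 : (0:ℝ) ∈ Set.Ico (0:ℝ) kbar := ⟨le_refl _, hkbar⟩
    obtain ⟨n, hn⟩ := pow_unbounded_of_one_lt (g (k 0) / g 0) hNθ1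
    have hkn : g 0 ≤ g (k n) := hgmono hmem0 (hkmem n) (hkmem n).1
    have h3 : g (k 0) < (N * θ) ^ n * g 0 := by
      rw [div_lt_iff₀ hg0] at hn
      linarith [hn]
    have := claim n
    have hpow : (0:ℝ) < (N * θ) ^ n := pow_pos (lt_trans one_pos hNθ1) n
    nlinarith
end

section
/- Let α be a finite Borel measure on [0,ā] doubling at ā with constant C, let v₁ : [0,ā] → [0,∞] be non-decreasing with ∫ v₁ dα < ∞, let θ ∈ (0,1), and let κ be a finite Borel measure on [0,ā] satisfying κ([ā-Δ, ā]) ≤ α([ā - Δ/(1-θ), ā]) for all Δ > 0. Then ∫ v₁ dκ < ∞. -/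
open Set MeasureTheory

theorem integrability_from_tail_comparison
    (abar C θ : ℝ) (habar : 0 < abar) (hC : 0 ≤ C) (hθ : θ ∈ Set.Ioo (0:ℝ) 1)
    (α κ : Measure ℝ) [IsFiniteMeasure α] [IsFiniteMeasure κ]
    (hαsupp : α ((Set.Icc 0 abar)ᶜ) = 0)
    (hκsupp : κ ((Set.Icc 0 abar)ᶜ) = 0)
    (hdouble : ∀ Δ > (0:ℝ),
      α (Set.Icc (abar - 2*Δ) abar) ≤ ENNReal.ofReal C * α (Set.Icc (abar - Δ) abar))
    (v₁ : ℝ → ENNReal) (hv₁ : Monotone v₁)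
    (hαint : ∫⁻ a, v₁ a ∂α < ⊤)
    (htail : ∀ Δ > (0:ℝ),
      κ (Set.Icc (abar - Δ) abar) ≤ α (Set.Icc (abar - Δ/(1-θ)) abar)) :
    ∫⁻ k, v₁ k ∂κ < ⊤ := by
  obtain ⟨hθ0, hθ1⟩ := hθ
  have h1θ : (0:ℝ) < 1 - θ := by linarith
  -- choose n with 1/(1-θ) ≤ 2^n
  obtain ⟨n, hn⟩ : ∃ n : ℕ, 1/(1-θ) ≤ (2:ℝ)^n := by
    obtain ⟨n, hn⟩ := pow_unbounded_of_one_lt (1/(1-θ)) (one_lt_two : (1:ℝ) < 2)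
    exact ⟨n, hn.le⟩
  set K : ENNReal := (ENNReal.ofReal C)^n with hK
  have hKtop : K ≠ ⊤ := by
    simp [hK, ENNReal.pow_ne_top, ENNReal.ofReal_ne_top]
  -- iterated doubling
  have hiter : ∀ m : ℕ, ∀ Δ > (0:ℝ),
      α (Set.Icc (abar - 2^m * Δ) abar) ≤ (ENNReal.ofReal C)^m * α (Set.Icc (abar - Δ) abar) := by
    intro m
    induction m with
    | zero => intro Δ hΔ; simp
    | succ m ih =>
      intro Δ hΔ
      have h2m : (0:ℝ) < 2^m * Δ := by positivity
      calc α (Set.Icc (abar - 2^(m+1) * Δ) abar)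
          = α (Set.Icc (abar - 2*(2^m * Δ)) abar) := by ring_nf
        _ ≤ ENNReal.ofReal C * α (Set.Icc (abar - 2^m*Δ) abar) := hdouble _ h2m
        _ ≤ ENNReal.ofReal C * ((ENNReal.ofReal C)^m * α (Set.Icc (abar - Δ) abar)) := by
            exact mul_le_mul_right (ih Δ hΔ) _
        _ = (ENNReal.ofReal C)^(m+1) * α (Set.Icc (abar - Δ) abar) := by ring
  -- tail comparison with the same measure α
  have hT : ∀ Δ > (0:ℝ), κ (Set.Icc (abar - Δ) abar) ≤ K * α (Set.Icc (abar - Δ) abar) := by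
    intro Δ hΔ
    have h1 : Δ/(1-θ) ≤ 2^n * Δ := by
      have := mul_le_mul_of_nonneg_right hn hΔ.le
      calc Δ/(1-θ) = 1/(1-θ) * Δ := by ring
        _ ≤ 2^n * Δ := this
    calc κ (Set.Icc (abar - Δ) abar) ≤ α (Set.Icc (abar - Δ/(1-θ)) abar) := htail Δ hΔ
      _ ≤ α (Set.Icc (abar - 2^n * Δ) abar) := by
          apply measure_mono
          apply Set.Icc_subset_Icc_left
          linarith
      _ ≤ K * α (Set.Icc (abar - Δ) abar) := hiter n Δ hΔ
  -- comparison for closed rays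
  have hIci : ∀ t : ℝ, κ (Set.Ici t) ≤ K * α (Set.Ici t) := by
    intro t
    rcases lt_trichotomy t abar with htlt | hteq | htgt
    · -- t < abar
      have hsub : Set.Ici t ⊆ Set.Icc t abar ∪ (Set.Icc 0 abar)ᶜ := by
        intro x hx
        by_cases hx' : x ∈ Set.Icc 0 abar
        · exact Or.inl ⟨hx, hx'.2⟩
        · exact Or.inr hx'
      calc κ (Set.Ici t) ≤ κ (Set.Icc t abar ∪ (Set.Icc 0 abar)ᶜ) := measure_mono hsub
        _ ≤ κ (Set.Icc t abar) + κ ((Set.Icc 0 abar)ᶜ) := measure_union_le _ _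
        _ = κ (Set.Icc (abar - (abar - t)) abar) := by rw [hκsupp]; ring_nf
        _ ≤ K * α (Set.Icc (abar - (abar - t)) abar) := hT _ (by linarith)
        _ ≤ K * α (Set.Ici t) := by
            apply mul_le_mul_right
            apply measure_mono
            intro x hx
            have : abar - (abar - t) = t := by ring
            rw [this] at hx
            exact hx.1
    · -- t = abar
      subst hteq
      set s : ℕ → Set ℝ := fun m => Set.Icc (t - 1/(m+1)) t with hs
      have hbound : ∀ m : ℕ, κ (Set.Ici t) ≤ K * α (s m) := by
        intro m
        have hpos : (0:ℝ) < 1/((m:ℝ)+1) := by positivity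
        have hsub : Set.Ici t ⊆ s m ∪ (Set.Icc 0 t)ᶜ := by
          intro x hx
          by_cases hx' : x ∈ Set.Icc 0 t
          · exact Or.inl ⟨by have := Set.mem_Ici.mp hx; linarith, hx'.2⟩
        
          · exact Or.inr hx'
        calc κ (Set.Ici t) ≤ κ (s m ∪ (Set.Icc 0 t)ᶜ) := measure_mono hsub
          _ ≤ κ (s m) + κ ((Set.Icc 0 t)ᶜ) := measure_union_le _ _
          _ = κ (Set.Icc (t - 1/(m+1)) t) := by rw [hκsupp]; simp [hs]
          _ ≤ K * α (Set.Icc (t - 1/(m+1)) t) := hT _ hpos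
      have hinter : ⋂ m : ℕ, s m = {t} := by
        ext x
        simp only [Set.mem_iInter, hs, Set.mem_Icc, Set.mem_singleton_iff]
        constructor
        · intro h
          have hle : x ≤ t := (h 0).2
          have hge : t ≤ x := by
            by_contra hlt
            push_neg at hlt
            obtain ⟨m, hm⟩ := exists_nat_gt (1/(t - x))
            have htx : (0:ℝ) < t - x := by linarith
            have h1 : 1/(t-x) < (m:ℝ) + 1 := by
              have : (m:ℝ) ≤ (m:ℝ)+1 := by linarith
              linarith
            have h2 : 1/((m:ℝ)+1) < t - x := by
              rw [div_lt_iff₀ (by positivity)] at h1 ⊢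
              · nlinarith
            have := (h m).1
            linarith
          linarith
        · intro h; subst h; intro m
          have : (0:ℝ) < 1/((m:ℝ)+1) := by positivity
          exact ⟨by linarith, le_rfl⟩
      have htend : Filter.Tendsto (fun m => α (s m)) Filter.atTop (nhds (α {t})) := by
        have := tendsto_measure_iInter_atTop (μ := α) (s := s)
          (fun m => (measurableSet_Icc).nullMeasurableSet)
          (fun i j hij => by
            apply Set.Icc_subset_Icc_left
            have h1 : (i:ℝ)+1 ≤ (j:ℝ)+1 := by exact_mod_cast by omega
            have h2 : 1/((j:ℝ)+1) ≤ 1/((i:ℝ)+1) := by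
              apply one_div_le_one_div_of_le (by positivity) h1
            linarith)
          ⟨0, measure_ne_top _ _⟩
        rwa [hinter] at this
      have htend' : Filter.Tendsto (fun m => K * α (s m)) Filter.atTop (nhds (K * α {t})) :=
        ENNReal.Tendsto.const_mul htend (Or.inr hKtop)
      have hle := ge_of_tendsto htend' (Filter.Eventually.of_forall hbound)
      exact hle.trans (mul_le_mul_right (measure_mono (by simp)) _)
    · -- abar < t
      have : κ (Set.Ici t) = 0 := by
        apply measure_mono_null _ hκsupp
        intro x hx hx'
        have : x ≤ abar := hx'.2
        have : t ≤ x := hx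
        linarith
      simp [this]
  -- comparison for open rays
  have hIoi : ∀ t : ℝ, κ (Set.Ioi t) ≤ K * α (Set.Ioi t) := by
    intro t
    rcases le_or_gt abar t with htge | htlt
    · have : κ (Set.Ioi t) = 0 := by
        apply measure_mono_null _ hκsupp
        intro x hx hx'
        have : x ≤ abar := hx'.2
        have : t < x := hx
        linarith
      simp [this]
    · set s : ℕ → Set ℝ := fun m => Set.Ici (t + (abar - t)/(m+1)) with hs
      have hmono : Monotone s := by
        intro i j hij
        apply Set.Ici_subset_Ici.mpr
        have h1 : (i:ℝ)+1 ≤ (j:ℝ)+1 := by exact_mod_cast by omega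
        have h2 : (abar-t)/((j:ℝ)+1) ≤ (abar-t)/((i:ℝ)+1) := by
          apply div_le_div_of_nonneg_left (by linarith) (by positivity) h1
        linarith
      have hunion : ⋃ m : ℕ, s m = Set.Ioi t := by
        ext x
        simp only [Set.mem_iUnion, hs, Set.mem_Ici, Set.mem_Ioi]
        constructor
        · rintro ⟨m, hm⟩
          have h0 : (0:ℝ) < abar - t := by linarith
          have : (0:ℝ) < (abar - t)/((m:ℝ)+1) := by positivity
          linarith
        · intro hx
          obtain ⟨m, hm⟩ := exists_nat_gt ((abar - t)/(x - t))
          refine ⟨m, ?_⟩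
          have hxt : (0:ℝ) < x - t := by linarith
          have h1 : (abar - t)/(x-t) < (m:ℝ)+1 := by linarith
          have h2 : (abar - t)/((m:ℝ)+1) < x - t := by
            rw [div_lt_iff₀ (by positivity)] at h1 ⊢
            nlinarith
          linarith
      have htend : Filter.Tendsto (fun m => κ (s m)) Filter.atTop (nhds (κ (Set.Ioi t))) := by
        have := tendsto_measure_iUnion_atTop (μ := κ) hmono
        rwa [hunion] at this
      apply le_of_tendsto htend
      apply Filter.Eventually.of_forall
      intro m
      calc κ (s m) ≤ K * α (s m) := hIci _
        _ ≤ K * α (Set.Ioi t) := by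
            apply mul_le_mul_right
            apply measure_mono
            intro x hx
            have h0 : (0:ℝ) < abar - t := by linarith
            have : (0:ℝ) < (abar - t)/((m:ℝ)+1) := by positivity
            have hx' : t + (abar - t)/((m:ℝ)+1) ≤ x := hx
            simp only [Set.mem_Ioi]
            linarith
  -- comparison for all upper sets
  have hupper : ∀ s : Set ℝ, IsUpperSet s → κ s ≤ K * α s := by
    intro s hsup
    rcases s.eq_empty_or_nonempty with rfl | ⟨x₀, hx₀⟩
    · simp
    rcases eq_or_ne s Set.univ with rfl | hne
    · have hsub : Set.univ ⊆ Set.Icc (abar - abar) abar ∪ (Set.Icc 0 abar)ᶜ := by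
        intro x _
        by_cases hx' : x ∈ Set.Icc 0 abar
        · exact Or.inl ⟨by linarith [hx'.1], hx'.2⟩
        · exact Or.inr hx'
      calc κ Set.univ ≤ κ (Set.Icc (abar - abar) abar ∪ (Set.Icc 0 abar)ᶜ) := measure_mono hsub
        _ ≤ κ (Set.Icc (abar - abar) abar) + κ ((Set.Icc 0 abar)ᶜ) := measure_union_le _ _
        _ = κ (Set.Icc (abar - abar) abar) := by rw [hκsupp, add_zero]
        _ ≤ K * α (Set.Icc (abar - abar) abar) := hT _ habar
        _ ≤ K * α Set.univ := mul_le_mul_right (measure_mono (Set.subset_univ _)) _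
    · -- s nonempty, proper: it is Ici b or Ioi b
      obtain ⟨z, hz⟩ : ∃ z, z ∉ s := by
        by_contra h
        push_neg at h
        exact hne (Set.eq_univ_of_forall h)
      have hlb : ∀ x ∈ s, z < x := by
        intro x hx
        by_contra h
        push_neg at h
        exact hz (hsup h hx)
      have hbdd : BddBelow s := ⟨z, fun x hx => (hlb x hx).le⟩
      set b := sInf s with hb
      by_cases hbs : b ∈ s
      · have : s = Set.Ici b := by
          apply le_antisymm
          · intro x hx; exact csInf_le hbdd hx
          · intro x hx; exact hsup hx hbs
        rw [this]; exact hIci b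
      · have : s = Set.Ioi b := by
          apply le_antisymm
          · intro x hx
            have h1 : b ≤ x := csInf_le hbdd hx
            rcases h1.lt_or_eq with h | h
            · exact h
            · exact absurd (h ▸ hx) hbs
          · intro x hx
            obtain ⟨y, hy, hyx⟩ := exists_lt_of_csInf_lt ⟨x₀, hx₀⟩ hx
            exact hsup hyx.le hy
        rw [this]; exact hIoi b
  -- v₁ measurable
  have hvmeas : Measurable v₁ := hv₁.measurable
  -- truncation bound
  have hM : ∀ M : ℕ, ∫⁻ x, min (v₁ x) M ∂κ ≤ K * ∫⁻ a, v₁ a ∂α := by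
    intro M
    set g : ℝ → ℝ := fun x => (min (v₁ x) M).toReal with hg
    have hmin_ne_top : ∀ x, min (v₁ x) M ≠ ⊤ := by
      intro x
      exact ne_top_of_le_ne_top (ENNReal.natCast_ne_top M) (min_le_right _ _)
    have hofReal : ∀ x, ENNReal.ofReal (g x) = min (v₁ x) M := by
      intro x; exact ENNReal.ofReal_toReal (hmin_ne_top x)
    have hgmono : Monotone g := by
      intro x y hxy
      apply ENNReal.toReal_mono (hmin_ne_top y)
      exact min_le_min (hv₁ hxy) le_rfl
    have hgnn : ∀ x, 0 ≤ g x := fun x => ENNReal.toReal_nonneg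
    have hkey : ∀ (μ : Measure ℝ), ∫⁻ x, min (v₁ x) M ∂μ = ∫⁻ t in Set.Ioi 0, μ {a | t < g a} := by
      intro μ
      rw [← lintegral_eq_lintegral_meas_lt μ (Filter.Eventually.of_forall hgnn)
        hgmono.measurable.aemeasurable]
      exact lintegral_congr fun x => (hofReal x).symm
    calc ∫⁻ x, min (v₁ x) M ∂κ = ∫⁻ t in Set.Ioi 0, κ {a | t < g a} := hkey κ
      _ ≤ ∫⁻ t in Set.Ioi 0, K * α {a | t < g a} := by
          apply lintegral_mono
          intro t
          exact hupper _ (fun x y hxy hx => lt_of_lt_of_le hx (hgmono hxy))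
      _ = K * ∫⁻ t in Set.Ioi 0, α {a | t < g a} := lintegral_const_mul' _ _ hKtop
      _ = K * ∫⁻ x, min (v₁ x) M ∂α := by rw [hkey α]
      _ ≤ K * ∫⁻ a, v₁ a ∂α := by
          apply mul_le_mul_right
          exact lintegral_mono fun x => min_le_left _ _
  -- monotone convergence
  have hsup : ∀ x, ⨆ M : ℕ, min (v₁ x) (M : ENNReal) = v₁ x := by
    intro x
    rcases eq_or_ne (v₁ x) ⊤ with h | h
    · simp [h, ENNReal.iSup_natCast]
    · obtain ⟨M, hMx⟩ := ENNReal.exists_nat_gt h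
      apply le_antisymm (iSup_le fun _ => min_le_left _ _)
      exact le_iSup_of_le M (le_min le_rfl hMx.le)
  have hmc : ∫⁻ k, v₁ k ∂κ = ⨆ M : ℕ, ∫⁻ x, min (v₁ x) M ∂κ := by
    rw [← lintegral_iSup (fun M => hvmeas.min measurable_const)
      (fun i j hij x => min_le_min le_rfl (by exact_mod_cast Nat.cast_le.mpr hij))]
    exact lintegral_congr fun x => (hsup x).symm
  rw [hmc]
  calc (⨆ M : ℕ, ∫⁻ x, min (v₁ x) M ∂κ) ≤ K * ∫⁻ a, v₁ a ∂α := iSup_le hM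
    _ < ⊤ := ENNReal.mul_lt_top hKtop.lt_top hαint
end
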